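/- arXiv:2503.13071 — 5 statements merged into one kernel-verified Lean document; each statement's English description precedes it below -/
import Mathlib

section
/- Let d ≥ 2 and let D ⊂ ℝ^d be nonempty, open, bounded and strictly convex (its boundary contains no nondegenerate line segment). Then the cutoff map Λ : closure(D) × ℝ^d → closure(D) is continuous. -/
open Metric Set Bornology

noncomputable section

/-- `lamT D y z` is the largest `t ∈ [0,1]` such that `y + t • (z - y) ∈ closure D`
(for `y ∈ closure D` the defining set is nonempty, closed and bounded, so the
supremum is a maximum). -/
def lamT {d : ℕ} (D : Set (EuclideanSpace ℝ (Fin d)))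
    (y z : EuclideanSpace ℝ (Fin d)) : ℝ :=
  sSup {t : ℝ | t ∈ Set.Icc (0 : ℝ) 1 ∧ y + t • (z - y) ∈ closure D}

/-- The cutoff map `Λ(y,z) = y + t(y,z)•(z-y)`. -/
def Lam {d : ℕ} (D : Set (EuclideanSpace ℝ (Fin d)))
    (y z : EuclideanSpace ℝ (Fin d)) : EuclideanSpace ℝ (Fin d) :=
  y + lamT D y z • (z - y)

/-!
The cutoff `t(y,z)` is upper semicontinuous for every closed set: if no parameter in the
compact interval `[c,1]` sends `(y,z)` into `closure D`, the same holds near `(y,z)` (tube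
lemma). Strict convexity gives lower semicontinuity at `z ≠ y`: some point of the segment
from `y` to `Λ(y,z)` is off the boundary, hence in `D`, and convexity spreads this interior
point over the whole open segment, so every `t < t(y,z)` stays admissible near `(y,z)`.
On the diagonal, `Λ(y',z')` lies within `‖z' - y'‖` of `y'` because `t ∈ [0,1]`.
-/

open Filter Topology

section OpenSegment

variable {E : Type*} [AddCommGroup E] [Module ℝ E] [TopologicalSpace E]
  [IsTopologicalAddGroup E] [ContinuousSMul ℝ E] {D : Set E} {a b : E}

theorem Convex.openSegment_subset_of_not_segment_subset_frontier (hconv : Convex ℝ D)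
    (hop : IsOpen D) (ha : a ∈ closure D) (hb : b ∈ closure D)
    (hab : ¬ segment ℝ a b ⊆ frontier D) : openSegment ℝ a b ⊆ D := by
  obtain ⟨w, hw, hwD⟩ : ∃ w ∈ segment ℝ a b, w ∈ D := by
    obtain ⟨w, hw, hwfr⟩ := not_subset.1 hab
    rw [hop.frontier_eq] at hwfr
    exact ⟨w, hw, by_contra fun hwD => hwfr ⟨hconv.closure.segment_subset ha hb hw, hwD⟩⟩
  have hw_line : w ∈ range (AffineMap.lineMap a b : ℝ → E) := by
    rw [segment_eq_image_lineMap] at hw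
    exact image_subset_range _ _ hw
  rw [← hop.interior_eq] at hwD ⊢
  refine (openSegment_subset_union a b hw_line).trans ?_
  rintro x (rfl | hx | hx)
  · exact hwD
  · exact hconv.openSegment_closure_interior_subset_interior ha hwD hx
  · exact hconv.openSegment_interior_closure_subset_interior hwD hb hx

end OpenSegment

section Cutoff

variable {d : ℕ} {D : Set (EuclideanSpace ℝ (Fin d))} {y z : EuclideanSpace ℝ (Fin d)}

theorem lamT_nonneg (D : Set (EuclideanSpace ℝ (Fin d))) (y z : EuclideanSpace ℝ (Fin d)) :
    0 ≤ lamT D y z :=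
  Real.sSup_nonneg fun _ ht => ht.1.1

theorem lamT_le_one (D : Set (EuclideanSpace ℝ (Fin d))) (y z : EuclideanSpace ℝ (Fin d)) :
    lamT D y z ≤ 1 :=
  Real.sSup_le (fun _ ht => ht.1.2) zero_le_one

theorem le_lamT {t : ℝ} (ht : t ∈ Icc 0 1) (h : y + t • (z - y) ∈ closure D) :
    t ≤ lamT D y z :=
  le_csSup ⟨1, fun _ hs => hs.1.2⟩ ⟨ht, h⟩

theorem lamT_le_of_forall_notMem {c : ℝ} (hc : 0 ≤ c)
    (h : ∀ t ∈ Icc c 1, y + t • (z - y) ∉ closure D) : lamT D y z ≤ c :=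
  Real.sSup_le (fun t ht => le_of_not_ge fun hct => h t ⟨hct, ht.1.2⟩ ht.2) hc

theorem Lam_mem_closure (hy : y ∈ closure D) : Lam D y z ∈ closure D := by
  have hclosed : IsClosed {t : ℝ | t ∈ Icc (0 : ℝ) 1 ∧ y + t • (z - y) ∈ closure D} :=
    isClosed_Icc.inter (isClosed_closure.preimage (by fun_prop))
  exact (hclosed.csSup_mem ⟨0, ⟨left_mem_Icc.2 zero_le_one, by simpa using hy⟩⟩
    ⟨1, fun _ ht => ht.1.2⟩).2

theorem Lam_self (D : Set (EuclideanSpace ℝ (Fin d))) (y : EuclideanSpace ℝ (Fin d)) :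
    Lam D y y = y := by
  simp [Lam]

theorem upperSemicontinuous_lamT (D : Set (EuclideanSpace ℝ (Fin d))) :
    UpperSemicontinuous fun p : EuclideanSpace ℝ (Fin d) × EuclideanSpace ℝ (Fin d) =>
      lamT D p.1 p.2 := by
  rintro ⟨y, z⟩ c (hc : lamT D y z < c)
  obtain ⟨c', hlt, hc'c⟩ := exists_between hc
  have hc'_nonneg : 0 ≤ c' := (lamT_nonneg D y z).trans hlt.le
  have hout : ∀ t ∈ Icc c' 1, y + t • (z - y) ∉ closure D := fun t ht hmem =>
    (hlt.trans_le ht.1).not_ge (le_lamT ⟨hc'_nonneg.trans ht.1, ht.2⟩ hmem)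
  -- tube lemma over the compact parameter interval `[c', 1]`
  have hnear : ∀ᶠ p in 𝓝 (y, z), ∀ t ∈ Icc c' 1, p.1 + t • (p.2 - p.1) ∉ closure D := by
    refine isCompact_Icc.eventually_forall_of_forall_eventually fun t ht => ?_
    have hcont : Continuous fun q : (EuclideanSpace ℝ (Fin d) × EuclideanSpace ℝ (Fin d)) × ℝ =>
        q.1.1 + q.2 • (q.1.2 - q.1.1) := by fun_prop
    exact (hcont.continuousAt (x := ((y, z), t))).preimage_mem_nhds
      (isClosed_closure.isOpen_compl.mem_nhds (hout t ht))
  filter_upwards [hnear] with p hp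
  exact (lamT_le_of_forall_notMem hc'_nonneg hp).trans_lt hc'c

theorem openSegment_Lam_subset (hop : IsOpen D) (hconv : Convex ℝ D)
    (hstrict : ∀ a b : EuclideanSpace ℝ (Fin d), a ≠ b → ¬ segment ℝ a b ⊆ frontier D)
    (hy : y ∈ closure D) (hyΛ : y ≠ Lam D y z) : openSegment ℝ y (Lam D y z) ⊆ D :=
  hconv.openSegment_subset_of_not_segment_subset_frontier hop hy (Lam_mem_closure hy)
    (hstrict _ _ hyΛ)

theorem lowerSemicontinuousAt_lamT (hop : IsOpen D) (hconv : Convex ℝ D)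
    (hstrict : ∀ a b : EuclideanSpace ℝ (Fin d), a ≠ b → ¬ segment ℝ a b ⊆ frontier D)
    (hy : y ∈ closure D) (hzy : z ≠ y) :
    LowerSemicontinuousAt (fun p : EuclideanSpace ℝ (Fin d) × EuclideanSpace ℝ (Fin d) =>
      lamT D p.1 p.2) (y, z) := by
  intro c (hc : c < lamT D y z)
  rcases lt_or_ge c 0 with hc0 | hc0
  · exact .of_forall fun p => hc0.trans_le (lamT_nonneg D p.1 p.2)
  set T := lamT D y z
  have hT : 0 < T := hc0.trans_lt hc
  obtain ⟨t, hct, htT⟩ := exists_between hc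
  have hyΛ : y ≠ Lam D y z := by
    simpa [Lam, eq_comm (a := y), sub_eq_zero] using And.intro hT.ne' hzy
  have ht_mem : y + t • (z - y) ∈ D := by
    refine openSegment_Lam_subset hop hconv hstrict hy hyΛ ?_
    rw [openSegment_eq_image']
    refine ⟨t / T, ⟨div_pos (hc0.trans_lt hct) hT, (div_lt_one hT).2 htT⟩, ?_⟩
    simp only [Lam, add_sub_cancel_left, smul_smul]
    rw [show t / T * lamT D y z = t from div_mul_cancel₀ t hT.ne']
  have hnear : ∀ᶠ p in 𝓝 (y, z), p.1 + t • (p.2 - p.1) ∈ D :=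
    (Continuous.continuousAt (by fun_prop)).preimage_mem_nhds (hop.mem_nhds ht_mem)
  filter_upwards [hnear] with p hp
  exact hct.trans_le
    (le_lamT ⟨hc0.trans hct.le, htT.le.trans (lamT_le_one D y z)⟩ (subset_closure hp))

theorem continuousAt_Lam_of_ne (hop : IsOpen D) (hconv : Convex ℝ D)
    (hstrict : ∀ a b : EuclideanSpace ℝ (Fin d), a ≠ b → ¬ segment ℝ a b ⊆ frontier D)
    (hy : y ∈ closure D) (hzy : z ≠ y) :
    ContinuousAt (fun p : EuclideanSpace ℝ (Fin d) × EuclideanSpace ℝ (Fin d) =>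
      Lam D p.1 p.2) (y, z) := by
  have hlamT := continuousAt_iff_lower_upperSemicontinuousAt.2
    ⟨lowerSemicontinuousAt_lamT hop hconv hstrict hy hzy, upperSemicontinuous_lamT D (y, z)⟩
  exact continuousAt_fst.add (hlamT.smul (continuousAt_snd.sub continuousAt_fst))

theorem continuousAt_Lam_self (D : Set (EuclideanSpace ℝ (Fin d))) (y : EuclideanSpace ℝ (Fin d)) :
    ContinuousAt (fun p : EuclideanSpace ℝ (Fin d) × EuclideanSpace ℝ (Fin d) =>
      Lam D p.1 p.2) (y, y) := by
  have hbdd : IsBoundedUnder (· ≤ ·) (𝓝 (y, y))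
      (norm ∘ fun p : EuclideanSpace ℝ (Fin d) × EuclideanSpace ℝ (Fin d) => lamT D p.1 p.2) :=
    isBoundedUnder_of ⟨1, fun p => by
      simpa [abs_of_nonneg (lamT_nonneg D _ _)] using lamT_le_one D p.1 p.2⟩
  have hstep : Tendsto (fun p : EuclideanSpace ℝ (Fin d) × EuclideanSpace ℝ (Fin d) =>
      p.2 - p.1) (𝓝 (y, y)) (𝓝 0) := by
    rw [← sub_self y]
    exact continuousAt_snd.tendsto.sub continuousAt_fst.tendsto
  rw [ContinuousAt, Lam_self]
  simpa [Lam] using continuousAt_fst.tendsto.add (hbdd.smul_tendsto_zero hstep)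

end Cutoff

theorem stmt_0_general (d : ℕ) (D : Set (EuclideanSpace ℝ (Fin d)))
    (hop : IsOpen D) (hconv : Convex ℝ D)
    (hstrict : ∀ a b : EuclideanSpace ℝ (Fin d), a ≠ b → ¬ segment ℝ a b ⊆ frontier D) :
    ContinuousOn
      (fun p : EuclideanSpace ℝ (Fin d) × EuclideanSpace ℝ (Fin d) => Lam D p.1 p.2)
      ((closure D) ×ˢ (Set.univ : Set (EuclideanSpace ℝ (Fin d)))) := by
  rintro ⟨y, z⟩ ⟨hy, -⟩
  rcases eq_or_ne z y with rfl | hzy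
  · exact (continuousAt_Lam_self D z).continuousWithinAt
  · exact (continuousAt_Lam_of_ne hop hconv hstrict hy hzy).continuousWithinAt

/-- if `D ⊂ ℝ^d` (`d ≥ 2`) is nonempty, open, bounded and strictly convex
(convex, and its boundary contains no nondegenerate line segment), then the cutoff map
`Λ : closure D × ℝ^d → closure D` is continuous. -/
theorem stmt_0 (d : ℕ) (hd : 2 ≤ d) (D : Set (EuclideanSpace ℝ (Fin d)))
    (hne : D.Nonempty) (hop : IsOpen D) (hbd : IsBounded D) (hconv : Convex ℝ D)
    (hstrict : ∀ a b : EuclideanSpace ℝ (Fin d), a ≠ b → ¬ segment ℝ a b ⊆ frontier D) :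
    ContinuousOn
      (fun p : EuclideanSpace ℝ (Fin d) × EuclideanSpace ℝ (Fin d) => Lam D p.1 p.2)
      ((closure D) ×ˢ (Set.univ : Set (EuclideanSpace ℝ (Fin d)))) :=
  stmt_0_general d D hop hconv hstrict
end
end

section
/- Let d ≥ 1 and let Σ ⊂ ℝ^d be a nonempty open convex set. Let y ∈ Σ, let z ∈ ℝ^d ∖ Σ, and let a be a point of the segment [y,z] lying on the boundary ∂Σ. Then |a − z| · dist(y, ∂Σ) ≤ |y − z| · dist(z, ∂Σ); in particular, since dist(y,∂Σ) > 0, |a − z| ≤ |y − z| dist(z, ∂Σ) / dist(y, ∂Σ). -/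
/-!
The ball of radius `r = dist(y, ∂Σ)` about `y` lies in `Σ`. Write `a = u y + v z` with
`u + v = 1`. For any `b ∈ ∂Σ`, convexity puts the ball of radius `u r` about `u y + v b`
(the image of that ball under the homothety of centre `b` and ratio `u`) inside `Σ`, while
`a ∉ Σ`; hence `u r ≤ |a - (u y + v b)| = v |z - b| ≤ |z - b|`. Taking the infimum over `b`
gives `u r ≤ dist(z, ∂Σ)`, and `|a - z| = u |y - z|`.
-/

open Metric Set

open scoped Pointwise

theorem IsPreconnected.subset_of_disjoint_frontier {X : Type*} [TopologicalSpace X]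
    {s u : Set X} (hs : IsPreconnected s) (hu : IsOpen u) (hsu : (s ∩ u).Nonempty)
    (hfr : Disjoint s (frontier u)) : s ⊆ u :=
  hs.subset_of_closure_inter_subset hu hsu fun x ⟨hxcl, hxs⟩ ↦ by
    rw [closure_eq_self_union_frontier] at hxcl
    exact hxcl.resolve_right (hfr.notMem_of_mem_left hxs)

section NormedSpace

variable {E : Type*} [NormedAddCommGroup E] [NormedSpace ℝ E] {S : Set E}

theorem IsOpen.ball_infDist_frontier_subset (hS : IsOpen S) {y : E} (hy : y ∈ S) :
    ball y (infDist y (frontier S)) ⊆ S := by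
  rcases (ball y (infDist y (frontier S))).eq_empty_or_nonempty with hempty | hne
  · exact hempty ▸ empty_subset S
  exact (convex_ball _ _).isPreconnected.subset_of_disjoint_frontier hS
    ⟨y, mem_ball_self (nonempty_ball.1 hne), hy⟩ disjoint_ball_infDist

theorem Convex.ball_combo_subset_interior (hS : Convex ℝ S) {x y : E} {r u v : ℝ}
    (hball : ball y r ⊆ interior S) (hx : x ∈ closure S) (hu : 0 < u) (hv : 0 ≤ v)
    (huv : u + v = 1) : ball (u • y + v • x) (u * r) ⊆ interior S :=
  calc ball (u • y + v • x) (u * r) = u • ball y r + {v • x} := by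
        rw [_root_.smul_ball hu.ne', ball_add_singleton, Real.norm_of_nonneg hu.le]
    _ ⊆ u • interior S + v • closure S :=
        add_subset_add (smul_set_mono hball) (singleton_subset_iff.2 (smul_mem_smul_set hx))
    _ ⊆ interior S := hS.combo_interior_closure_subset_interior hu hv huv

theorem Convex.mul_infDist_frontier_le (hS : Convex ℝ S) (hS' : IsOpen S) {y z : E} {u v : ℝ}
    (hy : y ∈ S) (hu : 0 ≤ u) (hv : 0 ≤ v) (huv : u + v = 1)
    (ha : u • y + v • z ∈ frontier S) :
    u * infDist y (frontier S) ≤ infDist z (frontier S) := by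
  rcases hu.eq_or_lt with rfl | hu
  · simpa using infDist_nonneg
  have haS : u • y + v • z ∉ S := (disjoint_frontier_iff_isOpen.2 hS').notMem_of_mem_left ha
  refine (le_infDist ⟨_, ha⟩).2 fun b hb ↦ ?_
  have hball : ball (u • y + v • b) (u * infDist y (frontier S)) ⊆ S := by
    simpa only [hS'.interior_eq] using hS.ball_combo_subset_interior
      (hS'.interior_eq.symm ▸ hS'.ball_infDist_frontier_subset hy)
      (frontier_subset_closure hb) hu hv huv
  calc u * infDist y (frontier S) ≤ dist (u • y + v • z) (u • y + v • b) :=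
        not_lt.1 fun h ↦ haS (hball (mem_ball.2 h))
    _ = v * dist z b := by rw [dist_add_left, dist_smul₀, Real.norm_of_nonneg hv]
    _ ≤ dist z b := mul_le_of_le_one_left dist_nonneg (by linarith)

theorem dist_combo_right {y z : E} {u v : ℝ} (hu : 0 ≤ u) (huv : u + v = 1) :
    dist (u • y + v • z) z = u * dist y z :=
  calc dist (u • y + v • z) z = dist (u • y + v • z) (u • z + v • z) := by
        rw [← add_smul, huv, one_smul]
    _ = u * dist y z := by rw [dist_add_right, dist_smul₀, Real.norm_of_nonneg hu]

end NormedSpace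

theorem stmt_1_general (d : ℕ) (Sg : Set (EuclideanSpace ℝ (Fin d)))
    (hop : IsOpen Sg) (hconv : Convex ℝ Sg)
    (y z a : EuclideanSpace ℝ (Fin d)) (hy : y ∈ Sg)
    (haseg : a ∈ segment ℝ y z) (hafr : a ∈ frontier Sg) :
    dist a z * Metric.infDist y (frontier Sg) ≤ dist y z * Metric.infDist z (frontier Sg) ∧
    dist a z ≤ dist y z * Metric.infDist z (frontier Sg) / Metric.infDist y (frontier Sg) := by
  obtain ⟨u, v, hu, hv, huv, rfl⟩ := haseg
  have hmain : dist (u • y + v • z) z * infDist y (frontier Sg)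
      ≤ dist y z * infDist z (frontier Sg) := by
    rw [dist_combo_right hu huv, mul_comm u, mul_assoc]
    exact mul_le_mul_of_nonneg_left (hconv.mul_infDist_frontier_le hop hy hu hv huv hafr)
      dist_nonneg
  have hyfr : y ∉ frontier Sg := (disjoint_frontier_iff_isOpen.2 hop).notMem_of_mem_right hy
  have hry : 0 < infDist y (frontier Sg) :=
    (isClosed_frontier.notMem_iff_infDist_pos ⟨_, hafr⟩).1 hyfr
  exact ⟨hmain, (le_div_iff₀ hry).2 hmain⟩

/-- Thales-type estimate: let `Σ ⊂ ℝ^d` (`d ≥ 1`) be a nonempty open convex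
set, `y ∈ Σ`, `z ∉ Σ`, and let `a` be a point of the segment `[y,z]` lying on `∂Σ`. Then
`|a−z| · dist(y,∂Σ) ≤ |y−z| · dist(z,∂Σ)`; in particular (since `dist(y,∂Σ) > 0`)
`|a−z| ≤ |y−z| dist(z,∂Σ) / dist(y,∂Σ)`. -/
theorem stmt_1 (d : ℕ) (hd : 1 ≤ d) (Sg : Set (EuclideanSpace ℝ (Fin d)))
    (hne : Sg.Nonempty) (hop : IsOpen Sg) (hconv : Convex ℝ Sg)
    (y z a : EuclideanSpace ℝ (Fin d)) (hy : y ∈ Sg) (hz : z ∉ Sg)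
    (haseg : a ∈ segment ℝ y z) (hafr : a ∈ frontier Sg) :
    dist a z * Metric.infDist y (frontier Sg) ≤ dist y z * Metric.infDist z (frontier Sg) ∧
    dist a z ≤ dist y z * Metric.infDist z (frontier Sg) / Metric.infDist y (frontier Sg) :=
  stmt_1_general d Sg hop hconv y z a hy haseg hafr
end

section
/- Let d ≥ 2 and let ℍ = { u ∈ ℝ^d : u·e₁ > 0 } be the upper half-space, with boundary ∂ℍ = { u : u·e₁ = 0 }. For x ∈ ∂ℍ, a linear isometry A of ℝ^d with Ae₁ = e₁, y ∈ ℍ and z ∈ ℝ^d with z·e₁ < 0, let ḡ_x(A,y,z) denote the unique point of the segment [x+Ay, x+Az] lying on ∂ℍ, namely ḡ_x(A,y,z) = x + Ay + ( (y·e₁)/((y·e₁) − (z·e₁)) ) (Az − Ay). Then for all x, x' ∈ ∂ℍ, all linear isometries A, A' of ℝ^d with Ae₁ = A'e₁ = e₁, all y ∈ ℍ and all z ∈ ℝ^d with z·e₁ < 0: | |ḡ_x(A,y,z) − ḡ_{x'}(A',y,z)| − |x − x'| | ≤ ‖A − A'‖ ( |y| + |z| ). -/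
open Metric Set
open scoped RealInnerProductSpace

noncomputable section

/-- The first vector of the canonical basis of `ℝ^d`. -/
def e1 (d : ℕ) : EuclideanSpace ℝ (Fin d) :=
  if h : 0 < d then EuclideanSpace.single (⟨0, h⟩ : Fin d) 1 else 0

/-- `ḡ_x(A,y,z)`: the point where the segment `[x+Ay, x+Az]` crosses `∂ℍ`, namely
`x + Ay + ((y·e₁)/((y·e₁) − (z·e₁))) • (Az − Ay)`. -/
def gbar {d : ℕ} (x : EuclideanSpace ℝ (Fin d))
    (A : EuclideanSpace ℝ (Fin d) →ₗᵢ[ℝ] EuclideanSpace ℝ (Fin d))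
    (y z : EuclideanSpace ℝ (Fin d)) : EuclideanSpace ℝ (Fin d) :=
  x + A y + (⟪y, e1 d⟫ / (⟪y, e1 d⟫ - ⟪z, e1 d⟫)) • (A z - A y)

/-! The crossing point is `x + A w` with `w` on the segment `[y, z]`, so the two crossing points
differ from `x - x'` by `(A - A') w`, and `|w| ≤ |y| + |z|`. -/

theorem div_sub_mem_Icc {a b : ℝ} (ha : 0 < a) (hb : b < 0) : a / (a - b) ∈ Icc 0 1 :=
  ⟨div_nonneg ha.le (by linarith), (div_le_one (by linarith)).2 (by linarith)⟩

theorem norm_lineMap_le_add {E : Type*} [SeminormedAddCommGroup E] [NormedSpace ℝ E]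
    (y z : E) {t : ℝ} (ht : t ∈ Icc 0 1) : ‖AffineMap.lineMap y z t‖ ≤ ‖y‖ + ‖z‖ := by
  have hball := (convex_closedBall (0 : E) (‖y‖ + ‖z‖)).segment_subset
    (mem_closedBall_zero_iff.2 (le_add_of_nonneg_right (norm_nonneg z)))
    (mem_closedBall_zero_iff.2 (le_add_of_nonneg_left (norm_nonneg y)))
  exact mem_closedBall_zero_iff.1 (hball (lineMap_mem_segment ℝ y z ht))

theorem gbar_eq_add_lineMap {d : ℕ} (x : EuclideanSpace ℝ (Fin d))
    (A : EuclideanSpace ℝ (Fin d) →ₗᵢ[ℝ] EuclideanSpace ℝ (Fin d))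
    (y z : EuclideanSpace ℝ (Fin d)) :
    gbar x A y z = x + A (AffineMap.lineMap y z (⟪y, e1 d⟫ / (⟪y, e1 d⟫ - ⟪z, e1 d⟫))) := by
  rw [gbar, AffineMap.lineMap_apply_module', map_add, map_smul, map_sub]
  abel

theorem stmt_8_general (d : ℕ)
    (x x' : EuclideanSpace ℝ (Fin d))
    (A A' : EuclideanSpace ℝ (Fin d) →ₗᵢ[ℝ] EuclideanSpace ℝ (Fin d))
    (y z : EuclideanSpace ℝ (Fin d))
    (hy : 0 < ⟪y, e1 d⟫) (hz : ⟪z, e1 d⟫ < 0) :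
    |‖gbar x A y z - gbar x' A' y z‖ - ‖x - x'‖|
      ≤ ‖A.toContinuousLinearMap - A'.toContinuousLinearMap‖ * (‖y‖ + ‖z‖) := by
  set w := AffineMap.lineMap y z (⟪y, e1 d⟫ / (⟪y, e1 d⟫ - ⟪z, e1 d⟫))
  have hw : ‖w‖ ≤ ‖y‖ + ‖z‖ := norm_lineMap_le_add y z (div_sub_mem_Icc hy hz)
  calc |‖gbar x A y z - gbar x' A' y z‖ - ‖x - x'‖|
      ≤ ‖(gbar x A y z - gbar x' A' y z) - (x - x')‖ := abs_norm_sub_norm_le _ _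
    _ = ‖(A.toContinuousLinearMap - A'.toContinuousLinearMap) w‖ := by
        rw [gbar_eq_add_lineMap, gbar_eq_add_lineMap]
        congr 1
        simp only [sub_apply, LinearIsometry.coe_toContinuousLinearMap]
        abel
    _ ≤ ‖A.toContinuousLinearMap - A'.toContinuousLinearMap‖ * ‖w‖ :=
        ContinuousLinearMap.le_opNorm _ _
    _ ≤ ‖A.toContinuousLinearMap - A'.toContinuousLinearMap‖ * (‖y‖ + ‖z‖) := by gcongr

/-- flat half-space estimate: for `x, x' ∈ ∂ℍ`, linear isometries `A, A'` of
`ℝ^d` fixing `e₁`, `y ∈ ℍ` and `z` with `z·e₁ < 0`,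
`| |ḡ_x(A,y,z) − ḡ_{x'}(A',y,z)| − |x−x'| | ≤ ‖A−A'‖ (|y| + |z|)`. -/
theorem stmt_8 (d : ℕ) (hd : 2 ≤ d)
    (x x' : EuclideanSpace ℝ (Fin d))
    (hx : ⟪x, e1 d⟫ = 0) (hx' : ⟪x', e1 d⟫ = 0)
    (A A' : EuclideanSpace ℝ (Fin d) →ₗᵢ[ℝ] EuclideanSpace ℝ (Fin d))
    (hA : A (e1 d) = e1 d) (hA' : A' (e1 d) = e1 d)
    (y z : EuclideanSpace ℝ (Fin d))
    (hy : 0 < ⟪y, e1 d⟫) (hz : ⟪z, e1 d⟫ < 0) :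
    |‖gbar x A y z - gbar x' A' y z‖ - ‖x - x'‖|
      ≤ ‖A.toContinuousLinearMap - A'.toContinuousLinearMap‖ * (‖y‖ + ‖z‖) :=
  stmt_8_general d x x' A A' y z hy hz
end
end

section
/- Let D ⊂ ℝ² satisfy Assumption (D) with data (ε₀, η, n) (i.e. d = 2). Then there exist L > 0 and a family (A_y)_{y ∈ ∂D} of linear isometries of ℝ² such that A_y e₁ = n(y) for every y ∈ ∂D and ‖A_y − A_{y'}‖ ≤ L |y − y'| for all y, y' ∈ ∂D. -/
open Metric Set Bornology
open scoped RealInnerProductSpace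

noncomputable section

/-- The projection `ℝ^d → ℝ^{d−1}`, `u ↦ (u·e₂, …, u·e_d)`. -/
def projTail (d : ℕ) (u : EuclideanSpace ℝ (Fin d)) :
    EuclideanSpace ℝ (Fin (d - 1)) :=
  (EuclideanSpace.equiv (Fin (d - 1)) ℝ).symm fun i => u ⟨i.1 + 1, by have := i.isLt; omega⟩

/-- Assumption (D): `D ⊂ ℝ^d` (`d ≥ 2`) is nonempty, open, bounded and convex, `n x` is a
unit vector for `x ∈ ∂D`, and around each boundary point `x` the domain is, in suitable
isometric coordinates sending `e₁` to `n x`, the epigraph of a `C³` uniformly strongly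
convex function `ψ` with `ψ(0)=0`, `∇ψ(0)=0`, `Hess ψ ≥ η`, `‖D²ψ‖+‖D³ψ‖ ≤ η⁻¹`. -/
structure AssumptionD (d : ℕ) (D : Set (EuclideanSpace ℝ (Fin d))) (ε₀ η : ℝ)
    (n : EuclideanSpace ℝ (Fin d) → EuclideanSpace ℝ (Fin d)) : Prop where
  dim_ge : 2 ≤ d
  eps_pos : 0 < ε₀
  eps_lt_one : ε₀ < 1
  eta_pos : 0 < η
  nonempty : D.Nonempty
  isOpen : IsOpen D
  isBounded : Bornology.IsBounded D
  convex : Convex ℝ D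
  normal_norm : ∀ x ∈ frontier D, ‖n x‖ = 1
  chart : ∀ x ∈ frontier D,
    ∃ A₀ : EuclideanSpace ℝ (Fin d) →ₗᵢ[ℝ] EuclideanSpace ℝ (Fin d),
      A₀ (e1 d) = n x ∧
      ∃ ψ : EuclideanSpace ℝ (Fin (d - 1)) → ℝ,
        ContDiffOn ℝ 3 ψ (Metric.ball (0 : EuclideanSpace ℝ (Fin (d - 1))) ε₀) ∧
        (∀ v ∈ Metric.ball (0 : EuclideanSpace ℝ (Fin (d - 1))) ε₀, 0 ≤ ψ v) ∧
        ψ 0 = 0 ∧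
        fderiv ℝ ψ 0 = 0 ∧
        (∀ v ∈ Metric.ball (0 : EuclideanSpace ℝ (Fin (d - 1))) ε₀,
          ∀ w : EuclideanSpace ℝ (Fin (d - 1)),
            η * ‖w‖ ^ 2 ≤ iteratedFDeriv ℝ 2 ψ v ![w, w]) ∧
        (∀ v ∈ Metric.ball (0 : EuclideanSpace ℝ (Fin (d - 1))) ε₀,
          ‖iteratedFDeriv ℝ 2 ψ v‖ + ‖iteratedFDeriv ℝ 3 ψ v‖ ≤ η⁻¹) ∧
        D ∩ Metric.ball x ε₀ =
          (fun u : EuclideanSpace ℝ (Fin d) => x + A₀ u) ''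
            {u : EuclideanSpace ℝ (Fin d) |
              u ∈ Metric.ball (0 : EuclideanSpace ℝ (Fin d)) ε₀ ∧
              ψ (projTail d u) < ⟪u, e1 d⟫}

/-! In the plane, the linear isometry sending `e₁` to a unit vector `v` can be taken to be
multiplication by `v` in `ℂ ≅ ℝ²`, which depends `1`-Lipschitz on `v`; so it suffices to show that
the normal `n` is Lipschitz on `∂D`. In the chart at a boundary point `y`, `ψ` grows at most
quadratically, so `D` contains the ball of radius `r` tangent to `∂D` at `y`, namely
`B(y + r n(y), r)`; and convexity turns the chart into the supporting half-space
`D ⊆ {z | 0 < ⟪z - y, n(y)⟫}`. Testing the half-space at `y` against the ball at `y'` and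
conversely gives `r ‖n(y) - n(y')‖² ≤ ⟪y - y', n(y') - n(y)⟫ ≤ ‖y - y'‖ ‖n(y) - n(y')‖`. -/

open Filter Topology

section SecondOrderBound

variable {E F : Type*} [NormedAddCommGroup E] [NormedSpace ℝ E]
  [NormedAddCommGroup F] [NormedSpace ℝ F] {ψ : E → F} {ε C : ℝ}

lemma norm_fderiv_le_of_norm_iteratedFDeriv_two_le (hψ : ContDiffOn ℝ 2 ψ (ball 0 ε))
    (hd : fderiv ℝ ψ 0 = 0) (hC : ∀ v ∈ ball (0 : E) ε, ‖iteratedFDeriv ℝ 2 ψ v‖ ≤ C)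
    {w : E} (hw : w ∈ ball 0 ε) : ‖fderiv ℝ ψ w‖ ≤ C * ‖w‖ := by
  have hdiff : DifferentiableOn ℝ (fderiv ℝ ψ) (ball 0 ε) :=
    (hψ.fderiv_of_isOpen (m := 1) isOpen_ball (by norm_num)).differentiableOn one_ne_zero
  have hbound : ∀ x ∈ ball (0 : E) ε, ‖fderiv ℝ (fderiv ℝ ψ) x‖ ≤ C := fun x hx => by
    rw [← norm_iteratedFDeriv_one, norm_iteratedFDeriv_fderiv]
    exact hC x hx
  simpa [hd] using (convex_ball (0 : E) ε).norm_image_sub_le_of_norm_fderiv_le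
    (fun x hx => (hdiff x hx).differentiableAt (isOpen_ball.mem_nhds hx)) hbound
    (mem_ball_self (pos_of_mem_ball hw)) hw

lemma norm_sub_le_of_norm_iteratedFDeriv_two_le (hψ : ContDiffOn ℝ 2 ψ (ball 0 ε))
    (hd : fderiv ℝ ψ 0 = 0) (hC : ∀ v ∈ ball (0 : E) ε, ‖iteratedFDeriv ℝ 2 ψ v‖ ≤ C)
    {v : E} (hv : v ∈ ball 0 ε) : ‖ψ v - ψ 0‖ ≤ C * ‖v‖ ^ 2 := by
  have hsub : closedBall (0 : E) ‖v‖ ⊆ ball 0 ε := closedBall_subset_ball (mem_ball_zero_iff.1 hv)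
  have hC0 : 0 ≤ C := (norm_nonneg _).trans (hC v hv)
  have hbound : ∀ x ∈ closedBall (0 : E) ‖v‖, ‖fderiv ℝ ψ x‖ ≤ C * ‖v‖ := fun x hx =>
    (norm_fderiv_le_of_norm_iteratedFDeriv_two_le hψ hd hC (hsub hx)).trans
      (mul_le_mul_of_nonneg_left (mem_closedBall_zero_iff.1 hx) hC0)
  have := (convex_closedBall (0 : E) ‖v‖).norm_image_sub_le_of_norm_fderiv_le
    (fun x hx => (hψ.differentiableOn two_ne_zero).differentiableAt
      (isOpen_ball.mem_nhds (hsub hx))) hbound (mem_closedBall_self (norm_nonneg v))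
    (mem_closedBall_zero_iff.2 le_rfl)
  rwa [sub_zero, mul_assoc, ← sq] at this

end SecondOrderBound

section Support

variable {E : Type*} [NormedAddCommGroup E] [InnerProductSpace ℝ E] {D : Set E}

lemma Convex.inner_sub_pos_of_forall_mem_ball (hD : Convex ℝ D) (hDo : IsOpen D) {y v : E}
    (hy : y ∈ closure D) {ε : ℝ} (hε : 0 < ε) (hloc : ∀ p ∈ D ∩ ball y ε, 0 < ⟪p - y, v⟫) {z : E}
    (hz : z ∈ D) : 0 < ⟪z - y, v⟫ := by
  have hseg : ∀ᶠ t in 𝓝[>] (0 : ℝ), t ∈ Ioc 0 1 ∧ y + t • (z - y) ∈ ball y ε := by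
    have hcont : Tendsto (fun t : ℝ => y + t • (z - y)) (𝓝[>] 0) (𝓝 y) := by
      have : Continuous (fun t : ℝ => y + t • (z - y)) := by fun_prop
      simpa using (this.tendsto 0).mono_left nhdsWithin_le_nhds
    exact (Filter.eventually_of_mem (Ioc_mem_nhdsGT one_pos) fun _ ht => ht).and
      (hcont (ball_mem_nhds y hε))
  obtain ⟨t, ht, hball⟩ := hseg.exists
  have hmem : y + t • (z - y) ∈ D := by
    have := hD.add_smul_sub_mem_interior' hy (by rwa [hDo.interior_eq]) ht
    rwa [hDo.interior_eq] at this
  have := hloc _ ⟨hmem, hball⟩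
  rw [add_sub_cancel_left, real_inner_smul_left] at this
  exact pos_of_mul_pos_right this ht.1.le

lemma mul_one_sub_inner_le_of_ball_subset {r : ℝ} (hr : 0 < r) {y y' ν ν' : E} (hν : ‖ν‖ = 1)
    (hball : ball (y' + r • ν') r ⊆ D) (hsupp : ∀ z ∈ D, 0 ≤ ⟪z - y, ν⟫) :
    r * (1 - ⟪ν', ν⟫) ≤ ⟪y' - y, ν⟫ := by
  have hclosed : closure D ⊆ {z | 0 ≤ ⟪z - y, ν⟫} :=
    closure_minimal hsupp (isClosed_le continuous_const (by fun_prop))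
  have hz : y' + r • ν' - r • ν ∈ closure D := by
    refine closure_mono hball ?_
    rw [closure_ball _ hr.ne', mem_closedBall, dist_eq_norm]
    simp [norm_smul, hν, abs_of_pos hr]
  have := hclosed hz
  simp only [mem_ofPred_eq] at this
  have h1 : y' + r • ν' - r • ν - y = (y' - y) + r • ν' - r • ν := by abel
  rw [h1, inner_sub_left, inner_add_left, real_inner_smul_left, real_inner_smul_left,
    real_inner_self_eq_norm_sq, hν] at this
  linarith

lemma mul_norm_sub_le_of_ball_subset {r : ℝ} (hr : 0 < r) {y y' ν ν' : E} (hν : ‖ν‖ = 1)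
    (hν' : ‖ν'‖ = 1) (hball : ball (y + r • ν) r ⊆ D) (hball' : ball (y' + r • ν') r ⊆ D)
    (hsupp : ∀ z ∈ D, 0 ≤ ⟪z - y, ν⟫) (hsupp' : ∀ z ∈ D, 0 ≤ ⟪z - y', ν'⟫) :
    r * ‖ν - ν'‖ ≤ ‖y - y'‖ := by
  have h := mul_one_sub_inner_le_of_ball_subset hr hν hball' hsupp
  have h' := mul_one_sub_inner_le_of_ball_subset hr hν' hball hsupp'
  have hsq : r * ‖ν - ν'‖ ^ 2 ≤ ‖y - y'‖ * ‖ν - ν'‖ := calc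
    r * ‖ν - ν'‖ ^ 2 = r * (1 - ⟪ν', ν⟫) + r * (1 - ⟪ν, ν'⟫) := by
      rw [norm_sub_sq_real, hν, hν', real_inner_comm ν]; ring
    _ ≤ ⟪y' - y, ν⟫ + ⟪y - y', ν'⟫ := add_le_add h h'
    _ = ⟪y - y', ν' - ν⟫ := by
      rw [← neg_sub y, inner_neg_left, inner_sub_right]; ring
    _ ≤ ‖y - y'‖ * ‖ν - ν'‖ := by
      rw [← norm_neg (ν - ν'), neg_sub]; exact real_inner_le_norm _ _
  rcases (norm_nonneg (ν - ν')).eq_or_lt with h0 | hpos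
  · rw [← h0, mul_zero]; exact norm_nonneg _
  · nlinarith

end Support

lemma norm_e1 {d : ℕ} (hd : 0 < d) : ‖e1 d‖ = 1 := by
  simp [e1, hd]

lemma norm_projTail_le (d : ℕ) (u : EuclideanSpace ℝ (Fin d)) : ‖projTail d u‖ ≤ ‖u‖ := by
  rw [EuclideanSpace.norm_eq, EuclideanSpace.norm_eq]
  refine Real.sqrt_le_sqrt ?_
  let shift : Fin (d - 1) ↪ Fin d := ⟨fun i => ⟨i + 1, by omega⟩, fun i j h => by
    simpa [Fin.ext_iff] using h⟩
  calc ∑ i, ‖projTail d u i‖ ^ 2 = ∑ j ∈ Finset.univ.map shift, ‖u j‖ ^ 2 := by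
        rw [Finset.sum_map]; rfl
    _ ≤ ∑ j, ‖u j‖ ^ 2 :=
        Finset.sum_le_sum_of_subset_of_nonneg (Finset.subset_univ _) fun _ _ _ => by positivity

namespace AssumptionD

variable {d : ℕ} {D : Set (EuclideanSpace ℝ (Fin d))} {ε₀ η : ℝ}
  {n : EuclideanSpace ℝ (Fin d) → EuclideanSpace ℝ (Fin d)} {y : EuclideanSpace ℝ (Fin d)}

lemma inner_normal_pos_of_mem_ball (hD : AssumptionD d D ε₀ η n) (hy : y ∈ frontier D)
    {p : EuclideanSpace ℝ (Fin d)} (hp : p ∈ D ∩ ball y ε₀) : 0 < ⟪p - y, n y⟫ := by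
  obtain ⟨A₀, hA₀, ψ, -, hψ_nonneg, -, -, -, -, hchart⟩ := hD.chart y hy
  rw [hchart] at hp
  obtain ⟨u, ⟨hu, hψu⟩, rfl⟩ := hp
  have hproj : projTail d u ∈ ball 0 ε₀ :=
    mem_ball_zero_iff.2 ((norm_projTail_le d u).trans_lt (mem_ball_zero_iff.1 hu))
  rw [add_sub_cancel_left, ← hA₀, A₀.inner_map_map]
  exact (hψ_nonneg _ hproj).trans_lt hψu

lemma inner_normal_pos (hD : AssumptionD d D ε₀ η n) (hy : y ∈ frontier D)
    {z : EuclideanSpace ℝ (Fin d)} (hz : z ∈ D) : 0 < ⟪z - y, n y⟫ :=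
  hD.convex.inner_sub_pos_of_forall_mem_ball hD.isOpen (frontier_subset_closure hy) hD.eps_pos
    (fun _ hp => hD.inner_normal_pos_of_mem_ball hy hp) hz

lemma ball_subset (hD : AssumptionD d D ε₀ η n) (hy : y ∈ frontier D) {r : ℝ} (hr : 0 < r)
    (hrε : 2 * r ≤ ε₀) (hrη : 2 * r ≤ η) : ball (y + r • n y) r ⊆ D := by
  obtain ⟨A₀, hA₀, ψ, hψ, -, hψ0, hψd, -, hψb, hchart⟩ := hD.chart y hy
  have hη := hD.eta_pos
  intro z hz
  obtain ⟨u, rfl⟩ : ∃ u, y + A₀ u = z := by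
    obtain ⟨u, hu⟩ := (A₀.toLinearIsometryEquiv rfl).surjective (z - y)
    exact ⟨u, by rw [← A₀.toLinearIsometryEquiv_apply rfl, hu, add_sub_cancel]⟩
  have he1 : ‖e1 d‖ = 1 := norm_e1 (by linarith [hD.dim_ge])
  have hu : ‖u‖ ^ 2 < 2 * r * ⟪u, e1 d⟫ := by
    have h : ‖u - r • e1 d‖ < r := by
      rwa [← A₀.norm_map, map_sub, map_smul, hA₀, ← add_sub_add_left_eq_sub (A₀ u) _ y,
        ← dist_eq_norm]
    have h2 : ‖u - r • e1 d‖ ^ 2 < r ^ 2 := pow_lt_pow_left₀ h (norm_nonneg _) two_ne_zero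
    rw [norm_sub_sq_real, real_inner_smul_right, norm_smul, he1, Real.norm_of_nonneg hr.le] at h2
    linarith
  have hu_inner : ⟪u, e1 d⟫ ≤ ‖u‖ := by
    simpa [he1] using real_inner_le_norm u (e1 d)
  have hu_norm : ‖u‖ < ε₀ := by nlinarith [norm_nonneg u]
  have hproj : projTail d u ∈ ball 0 ε₀ :=
    mem_ball_zero_iff.2 ((norm_projTail_le d u).trans_lt hu_norm)
  have hψ_quad : ψ (projTail d u) ≤ η⁻¹ * ‖u‖ ^ 2 := by
    have h := norm_sub_le_of_norm_iteratedFDeriv_two_le (hψ.of_le (by norm_num)) hψd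
      (fun v hv => (le_add_of_nonneg_right (norm_nonneg _)).trans (hψb v hv)) hproj
    rw [hψ0, sub_zero, Real.norm_eq_abs] at h
    exact (le_abs_self _).trans (h.trans (by gcongr; exact norm_projTail_le d u))
  have hψu : ψ (projTail d u) < ⟪u, e1 d⟫ := by
    calc ψ (projTail d u) ≤ η⁻¹ * ‖u‖ ^ 2 := hψ_quad
      _ < η⁻¹ * (2 * r * ⟪u, e1 d⟫) := by gcongr
      _ ≤ ⟪u, e1 d⟫ := by
        rw [← mul_assoc]
        refine mul_le_of_le_one_left (by nlinarith [norm_nonneg u]) ?_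
        rw [inv_mul_le_iff₀ hη]; linarith
  have hmem : y + A₀ u ∈ D ∩ ball y ε₀ := hchart ▸ ⟨u, ⟨mem_ball_zero_iff.2 hu_norm, hψu⟩, rfl⟩
  exact hmem.1

lemma mul_norm_normal_sub_le (hD : AssumptionD d D ε₀ η n) (hy : y ∈ frontier D)
    {y' : EuclideanSpace ℝ (Fin d)} (hy' : y' ∈ frontier D) :
    min ε₀ η / 2 * ‖n y - n y'‖ ≤ ‖y - y'‖ := by
  have hr : 0 < min ε₀ η / 2 := half_pos (lt_min hD.eps_pos hD.eta_pos)
  have hrε : 2 * (min ε₀ η / 2) ≤ ε₀ := by linarith [min_le_left ε₀ η]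
  have hrη : 2 * (min ε₀ η / 2) ≤ η := by linarith [min_le_right ε₀ η]
  exact mul_norm_sub_le_of_ball_subset hr (hD.normal_norm y hy) (hD.normal_norm y' hy')
    (hD.ball_subset hy hr hrε hrη) (hD.ball_subset hy' hr hrε hrη)
    (fun _ hz => (hD.inner_normal_pos hy hz).le) (fun _ hz => (hD.inner_normal_pos hy' hz).le)

end AssumptionD

local notation "ℝ²" => EuclideanSpace ℝ (Fin 2)

open Complex in
/-- `complexMul v u` is the product `v * u` under the identification `ℝ² ≅ ℂ`, `e₁ ↦ 1`. -/
def complexMul (v : ℝ²) : ℝ² →L[ℝ] ℝ² :=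
  let φ := orthonormalBasisOneI.repr.toContinuousLinearEquiv
  (φ : ℂ →L[ℝ] ℝ²) ∘L ContinuousLinearMap.mul ℝ ℂ (φ.symm v) ∘L (φ.symm : ℝ² →L[ℝ] ℂ)

open Complex in
lemma complexMul_apply (v u : ℝ²) :
    complexMul v u = orthonormalBasisOneI.repr
      (orthonormalBasisOneI.repr.symm v * orthonormalBasisOneI.repr.symm u) := rfl

lemma norm_complexMul_apply (v u : ℝ²) : ‖complexMul v u‖ = ‖v‖ * ‖u‖ := by
  simp only [complexMul_apply, LinearIsometryEquiv.norm_map, norm_mul]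

lemma norm_complexMul_le (v : ℝ²) : ‖complexMul v‖ ≤ ‖v‖ :=
  ContinuousLinearMap.opNorm_le_bound _ (norm_nonneg v) fun u => (norm_complexMul_apply v u).le

lemma complexMul_sub (v w : ℝ²) : complexMul v - complexMul w = complexMul (v - w) := by
  ext1 u
  simp only [sub_apply, complexMul_apply, map_sub, sub_mul]

lemma complexMul_e1 (v : ℝ²) : complexMul v (e1 2) = v := by
  have : Complex.orthonormalBasisOneI.repr.symm (e1 2) = 1 := by simp [e1]
  rw [complexMul_apply, this, mul_one, LinearIsometryEquiv.apply_symm_apply]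

def complexMulIsometry (v : ℝ²) (hv : ‖v‖ = 1) : ℝ² →ₗᵢ[ℝ] ℝ² where
  toLinearMap := complexMul v
  norm_map' u := by rw [ContinuousLinearMap.coe_coe, norm_complexMul_apply, hv, one_mul]

/-- if `D ⊂ ℝ²` satisfies Assumption (D), there exist `L > 0` and a family
`(A_y)_{y ∈ ∂D}` of linear isometries of `ℝ²` with `A_y e₁ = n(y)` for every `y ∈ ∂D`
and `‖A_y − A_{y'}‖ ≤ L |y − y'|` for all `y, y' ∈ ∂D`. -/
theorem stmt_10 (D : Set (EuclideanSpace ℝ (Fin 2))) (ε₀ η : ℝ)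
    (n : EuclideanSpace ℝ (Fin 2) → EuclideanSpace ℝ (Fin 2))
    (hD : AssumptionD 2 D ε₀ η n) :
    ∃ L : ℝ, 0 < L ∧
      ∃ A : EuclideanSpace ℝ (Fin 2) →
          (EuclideanSpace ℝ (Fin 2) →ₗᵢ[ℝ] EuclideanSpace ℝ (Fin 2)),
        (∀ y ∈ frontier D, A y (e1 2) = n y) ∧
        ∀ y ∈ frontier D, ∀ y' ∈ frontier D,
          ‖(A y).toContinuousLinearMap - (A y').toContinuousLinearMap‖ ≤ L * ‖y - y'‖ := by
  have hr : 0 < min ε₀ η / 2 := half_pos (lt_min hD.eps_pos hD.eta_pos)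
  let A : ℝ² → (ℝ² →ₗᵢ[ℝ] ℝ²) := fun y =>
    if h : ‖n y‖ = 1 then complexMulIsometry (n y) h else LinearIsometry.id
  have hA : ∀ y ∈ frontier D, (A y).toContinuousLinearMap = complexMul (n y) := fun y hy => by
    simp only [A, dif_pos (hD.normal_norm y hy)]
    rfl
  refine ⟨(min ε₀ η / 2)⁻¹, inv_pos.2 hr, A, fun y hy => ?_, fun y hy y' hy' => ?_⟩
  · rw [← complexMul_e1 (n y), ← hA y hy]
    rfl
  · rw [hA y hy, hA y' hy', complexMul_sub]
    calc ‖complexMul (n y - n y')‖ ≤ ‖n y - n y'‖ := norm_complexMul_le _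
      _ ≤ (min ε₀ η / 2)⁻¹ * ‖y - y'‖ := by
        rw [le_inv_mul_iff₀ hr]
        exact hD.mul_norm_normal_sub_le hy hy'
end
end

section
/- Let (zₙ)_{n≥1} be nondecreasing càdlàg functions from [0,∞) to ℝ with zₙ(0) = 0 and lim_{u→∞} zₙ(u) = ∞, and suppose zₙ → z in the Skorokhod J₁ sense, where z is a strictly increasing càdlàg function with z(0) = 0 and lim_{u→∞} z(u) = ∞. Let y(t) = inf{ u ≥ 0 : z(u) > t } and yₙ(t) = inf{ u ≥ 0 : zₙ(u) > t } be the right-continuous inverses. Then: (i) for every T > 0, sup_{t ∈ [0,T]} |yₙ(t) − y(t)| → 0 as n → ∞; (ii) if tₙ → t > 0 and z(y(t)−) < t < z(y(t)), then Δzₙ(yₙ(tₙ)) → Δz(y(t)) as n → ∞. -/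
open Set Filter Function
open scoped Topology

noncomputable section

/-- The right-continuous generalized inverse `y(t) = inf{u ≥ 0 : z(u) > t}`. -/
def rcInv (z : ℝ → ℝ) (t : ℝ) : ℝ :=
  sInf {u : ℝ | 0 ≤ u ∧ t < z u}

/-! Since `z` is strictly increasing, `y` is continuous. Both parts rest on the time change:
on `[0, λₙ b)` the function `zₙ` only takes the values of `zₙ ∘ λₙ` on `[0, b)`, which are
uniformly close to those of `z`. This gives `yₙ(s) → y(s)` for every `s`, and pointwise convergence
of monotone functions to a continuous limit is locally uniform. For (ii), with `a = y(t)`, the gap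
`z(a−) < t < z(a)` forces `yₙ(tₙ) = λₙ(a)` for large `n`, while `zₙ(λₙ a) → z(a)` and
`zₙ(λₙ a −) → z(a−)`. -/

lemma tendstoUniformlyOn_atTop_iff_abs_sub_le {α : Type*} {F : ℕ → α → ℝ} {f : α → ℝ}
    {s : Set α} :
    TendstoUniformlyOn F f atTop s ↔
      ∀ ε > 0, ∃ N, ∀ n ≥ N, ∀ x ∈ s, |F n x - f x| ≤ ε := by
  refine Metric.tendstoUniformlyOn_iff.trans ⟨fun h ε hε => ?_, fun h ε hε => ?_⟩
  · exact eventually_atTop.1 <| (h ε hε).mono fun n hn x hx => by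
      rw [← Real.dist_eq, dist_comm]; exact (hn x hx).le
  · obtain ⟨N, hN⟩ := h (ε / 2) (half_pos hε)
    exact eventually_atTop.2 ⟨N, fun n hn x hx => by
      rw [dist_comm, Real.dist_eq]; exact (hN n hn x hx).trans_lt (half_lt_self hε)⟩

theorem tendstoLocallyUniformly_of_tendsto_of_monotone {ι : Type*} {p : Filter ι}
    {F : ι → ℝ → ℝ} {f : ℝ → ℝ} (hF : ∀ i, Monotone (F i)) (hf : Monotone f)
    (hfc : Continuous f) (h : ∀ x, Tendsto (fun i => F i x) p (𝓝 (f x))) :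
    TendstoLocallyUniformly F f p := by
  refine Metric.tendstoLocallyUniformly_iff.2 fun ε hε x => ?_
  obtain ⟨δ, hδ, hfδ⟩ := Metric.continuous_iff.1 hfc x (ε / 3) (by positivity)
  have hu : |f (x - δ / 2) - f x| < ε / 3 :=
    hfδ _ (by rw [Real.dist_eq, abs_lt]; constructor <;> linarith)
  have hv : |f (x + δ / 2) - f x| < ε / 3 :=
    hfδ _ (by rw [Real.dist_eq, abs_lt]; constructor <;> linarith)
  refine ⟨Icc (x - δ / 2) (x + δ / 2), Icc_mem_nhds (by linarith) (by linarith), ?_⟩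
  filter_upwards [(h (x - δ / 2)).eventually (Metric.ball_mem_nhds _ (by positivity : 0 < ε / 3)),
    (h (x + δ / 2)).eventually (Metric.ball_mem_nhds _ (by positivity : 0 < ε / 3))]
    with i hiu hiv y hy
  rw [Real.dist_eq] at hiu hiv ⊢
  rw [abs_lt] at hu hv hiu hiv ⊢
  have := hF i hy.1; have := hF i hy.2; have := hf hy.1; have := hf hy.2
  constructor <;> linarith

section rcInv

variable {z : ℝ → ℝ} {t u c : ℝ}

lemma nonempty_rcInv_set (htop : Tendsto z atTop atTop) (t : ℝ) :
    {u : ℝ | 0 ≤ u ∧ t < z u}.Nonempty :=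
  ((eventually_ge_atTop 0).and (htop.eventually_gt_atTop t)).exists

lemma rcInv_le (hu : 0 ≤ u) (h : t < z u) : rcInv z t ≤ u :=
  csInf_le ⟨0, fun _ hv => hv.1⟩ ⟨hu, h⟩

lemma rcInv_nonneg (htop : Tendsto z atTop atTop) (t : ℝ) : 0 ≤ rcInv z t :=
  le_csInf (nonempty_rcInv_set htop t) fun _ hu => hu.1

lemma le_rcInv (htop : Tendsto z atTop atTop) (h : ∀ u ∈ Ico 0 c, z u ≤ t) : c ≤ rcInv z t :=
  le_csInf (nonempty_rcInv_set htop t) fun u hu =>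
    not_lt.1 fun huc => (h u ⟨hu.1, huc⟩).not_gt hu.2

lemma rcInv_mono (htop : Tendsto z atTop atTop) : Monotone (rcInv z) := fun _ t hst =>
  le_csInf (nonempty_rcInv_set htop t) fun _ hu => rcInv_le hu.1 (hst.trans_lt hu.2)

lemma lt_apply_of_rcInv_lt (hz : MonotoneOn z (Ici 0)) (htop : Tendsto z atTop atTop)
    (h : rcInv z t < u) : t < z u := by
  obtain ⟨w, hw, hwu⟩ :=
    (csInf_lt_iff ⟨0, fun _ hv => hv.1⟩ (nonempty_rcInv_set htop t)).1 h
  exact hw.2.trans_le (hz hw.1 (mem_Ici.2 (hw.1.trans hwu.le)) hwu.le)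

lemma apply_lt_of_lt_rcInv (hz : StrictMonoOn z (Ici 0)) (hu : 0 ≤ u) (h : u < rcInv z t) :
    z u < t := by
  obtain ⟨m, hum, hmt⟩ := exists_between h
  have hzm : z m ≤ t := not_lt.1 fun h' => (rcInv_le (hu.trans hum.le) h').not_gt hmt
  exact (hz hu (hu.trans hum.le) hum).trans_le hzm

lemma continuous_rcInv (hz : StrictMonoOn z (Ici 0)) (htop : Tendsto z atTop atTop) :
    Continuous (rcInv z) := by
  refine continuous_iff_continuousAt.2 fun s => tendsto_order.2 ⟨fun a ha => ?_, fun a ha => ?_⟩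
  · rcases lt_or_ge a 0 with ha0 | ha0
    · exact Eventually.of_forall fun t => ha0.trans_le (rcInv_nonneg htop t)
    obtain ⟨b, hab, hb⟩ := exists_between ha
    have hb0 : 0 ≤ b := ha0.trans hab.le
    filter_upwards [eventually_gt_nhds (apply_lt_of_lt_rcInv hz hb0 hb)] with t ht
    exact hab.trans_le <| le_rcInv htop fun u hu => (hz.monotoneOn hu.1 hb0 hu.2.le).trans ht.le
  · obtain ⟨b, hab, hb⟩ := exists_between ha
    filter_upwards [eventually_lt_nhds (lt_apply_of_rcInv_lt hz.monotoneOn htop hab)] with t ht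
    exact (rcInv_le ((rcInv_nonneg htop s).trans hab.le) ht).trans_lt hb

end rcInv

section TimeChange

variable {ℓ : ℝ → ℝ} {b : ℝ}

lemma nonneg_of_image_Ici (hsurj : ℓ '' Ici 0 = Ici 0) (hb : 0 ≤ b) : 0 ≤ ℓ b := by
  have : ℓ b ∈ ℓ '' Ici 0 := mem_image_of_mem ℓ hb
  rwa [hsurj] at this

lemma Ico_subset_image_Ico (hℓ : StrictMonoOn ℓ (Ici 0)) (hsurj : ℓ '' Ici 0 = Ici 0)
    (hb : 0 ≤ b) : Ico 0 (ℓ b) ⊆ ℓ '' Ico 0 b := by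
  rintro u ⟨hu0, hub⟩
  obtain ⟨v, hv0, rfl⟩ : u ∈ ℓ '' Ici 0 := by rwa [hsurj]
  exact ⟨v, ⟨hv0, (hℓ.lt_iff_lt hv0 hb).1 hub⟩, rfl⟩

end TimeChange

section Skorokhod

variable {zseq : ℕ → ℝ → ℝ} {z : ℝ → ℝ} {lam : ℕ → ℝ → ℝ}

lemma eventually_forall_Ico_lt_of_timeChange (hlam : ∀ n, StrictMonoOn (lam n) (Ici 0))
    (hsurj : ∀ n, lam n '' Ici 0 = Ici 0)
    (hconv : ∀ T, TendstoUniformlyOn (fun n t => zseq n (lam n t)) z atTop (Icc 0 T))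
    {b c η : ℝ} (hb : 0 ≤ b) (hc : ∀ v ∈ Ico 0 b, z v ≤ c) (hη : 0 < η) :
    ∀ᶠ n in atTop, ∀ u ∈ Ico 0 (lam n b), zseq n u < c + η := by
  filter_upwards [Metric.tendstoUniformlyOn_iff.1 (hconv b) η hη] with n hn u hu
  obtain ⟨v, hv, rfl⟩ := Ico_subset_image_Ico (hlam n) (hsurj n) hb hu
  have := hn v (Ico_subset_Icc_self hv)
  rw [Real.dist_eq, abs_lt] at this
  linarith [hc v hv]

lemma tendsto_rcInv_of_skorokhod (htop : ∀ n, Tendsto (zseq n) atTop atTop)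
    (hz : StrictMonoOn z (Ici 0)) (hztop : Tendsto z atTop atTop)
    (hlam : ∀ n, StrictMonoOn (lam n) (Ici 0)) (hsurj : ∀ n, lam n '' Ici 0 = Ici 0)
    (hlamconv : TendstoUniformlyOn lam id atTop (Ici 0))
    (hconv : ∀ T, TendstoUniformlyOn (fun n t => zseq n (lam n t)) z atTop (Icc 0 T))
    (s : ℝ) : Tendsto (fun n => rcInv (zseq n) s) atTop (𝓝 (rcInv z s)) := by
  refine tendsto_order.2 ⟨fun a ha => ?_, fun a ha => ?_⟩
  · rcases lt_or_ge a 0 with ha0 | ha0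
    · exact Eventually.of_forall fun n => ha0.trans_le (rcInv_nonneg (htop n) s)
    obtain ⟨b, hab, hb⟩ := exists_between ha
    have hb0 : 0 ≤ b := ha0.trans hab.le
    have hzb : z b < s := apply_lt_of_lt_rcInv hz hb0 hb
    filter_upwards [eventually_forall_Ico_lt_of_timeChange hlam hsurj hconv hb0
        (fun v hv => hz.monotoneOn hv.1 hb0 hv.2.le) (sub_pos.2 hzb),
      (hlamconv.tendsto_at hb0).eventually (eventually_gt_nhds hab)] with n hn hlt
    refine hlt.trans_le (le_rcInv (htop n) fun u hu => ?_)
    linarith [hn u hu]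
  · obtain ⟨b, hab, hb⟩ := exists_between ha
    have hb0 : 0 ≤ b := (rcInv_nonneg hztop s).trans hab.le
    have hzb : s < z b := lt_apply_of_rcInv_lt hz.monotoneOn hztop hab
    filter_upwards [((hconv b).tendsto_at (right_mem_Icc.2 hb0)).eventually (eventually_gt_nhds hzb),
      (hlamconv.tendsto_at hb0).eventually (eventually_lt_nhds hb)] with n hn hlt
    exact (rcInv_le (nonneg_of_image_Ici (hsurj n) hb0) hn).trans_lt hlt

lemma eventually_rcInv_eq_of_skorokhod (hzmono : Monotone z)
    (htop : ∀ n, Tendsto (zseq n) atTop atTop)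
    (hlam : ∀ n, StrictMonoOn (lam n) (Ici 0)) (hsurj : ∀ n, lam n '' Ici 0 = Ici 0)
    (hconv : ∀ T, TendstoUniformlyOn (fun n t => zseq n (lam n t)) z atTop (Icc 0 T))
    {tseq : ℕ → ℝ} {t a : ℝ} (ha : 0 ≤ a) (htseq : Tendsto tseq atTop (𝓝 t))
    (hl : leftLim z a < t) (hr : t < z a) :
    ∀ᶠ n in atTop, rcInv (zseq n) (tseq n) = lam n a := by
  filter_upwards [eventually_forall_Ico_lt_of_timeChange hlam hsurj hconv ha
      (fun v hv => hzmono.le_leftLim hv.2) (half_pos (sub_pos.2 hl)),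
    tendsto_const_nhds.eventually_lt htseq (by linarith : leftLim z a + (t - leftLim z a) / 2 < t),
    htseq.eventually_lt ((hconv a).tendsto_at (right_mem_Icc.2 ha)) hr] with n hn hlow hup
  exact le_antisymm (rcInv_le (nonneg_of_image_Ici (hsurj n) ha) hup)
    (le_rcInv (htop n) fun u hu => (hn u hu).le.trans hlow.le)

lemma tendsto_leftLim_of_skorokhod (hmono : ∀ n, Monotone (zseq n)) (hzmono : Monotone z)
    (hlam : ∀ n, StrictMonoOn (lam n) (Ici 0)) (hsurj : ∀ n, lam n '' Ici 0 = Ici 0)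
    (hconv : ∀ T, TendstoUniformlyOn (fun n t => zseq n (lam n t)) z atTop (Icc 0 T))
    {a : ℝ} (ha : 0 < a) :
    Tendsto (fun n => leftLim (zseq n) (lam n a)) atTop (𝓝 (leftLim z a)) := by
  refine tendsto_order.2 ⟨fun c hc => ?_, fun c hc => ?_⟩
  · obtain ⟨w, hcw, hw⟩ := (((hzmono.tendsto_leftLim a).eventually (eventually_gt_nhds hc)).and
      (Ioo_mem_nhdsLT ha)).exists
    filter_upwards [((hconv w).tendsto_at (right_mem_Icc.2 hw.1.le)).eventually
      (eventually_gt_nhds hcw)] with n hn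
    exact hn.trans_le ((hmono n).le_leftLim (hlam n hw.1.le ha.le hw.2))
  · filter_upwards [eventually_forall_Ico_lt_of_timeChange hlam hsurj hconv ha.le
      (fun v hv => hzmono.le_leftLim hv.2) (half_pos (sub_pos.2 hc))] with n hn
    have hpos : 0 < lam n a :=
      (nonneg_of_image_Ici (hsurj n) le_rfl).trans_lt (hlam n self_mem_Ici ha.le ha)
    refine (le_of_tendsto ((hmono n).tendsto_leftLim _) ?_).trans_lt
      (by linarith : leftLim z a + (c - leftLim z a) / 2 < c)
    filter_upwards [Ioo_mem_nhdsLT hpos] with u hu using (hn u ⟨hu.1.le, hu.2⟩).le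

lemma tendsto_jump_of_skorokhod (hmono : ∀ n, Monotone (zseq n)) (hzmono : Monotone z)
    (htop : ∀ n, Tendsto (zseq n) atTop atTop)
    (hlam : ∀ n, StrictMonoOn (lam n) (Ici 0)) (hsurj : ∀ n, lam n '' Ici 0 = Ici 0)
    (hconv : ∀ T, TendstoUniformlyOn (fun n t => zseq n (lam n t)) z atTop (Icc 0 T))
    {tseq : ℕ → ℝ} {t a : ℝ} (ha : 0 < a) (htseq : Tendsto tseq atTop (𝓝 t))
    (hl : leftLim z a < t) (hr : t < z a) :
    Tendsto (fun n => zseq n (rcInv (zseq n) (tseq n)) -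
        leftLim (zseq n) (rcInv (zseq n) (tseq n))) atTop (𝓝 (z a - leftLim z a)) :=
  (((hconv a).tendsto_at (right_mem_Icc.2 ha.le)).sub
    (tendsto_leftLim_of_skorokhod hmono hzmono hlam hsurj hconv ha)).congr' <|
    (eventually_rcInv_eq_of_skorokhod hzmono htop hlam hsurj hconv ha.le htseq hl hr).mono
      fun n hn => by dsimp only; rw [hn]

end Skorokhod

theorem stmt_19_general
    (zseq : ℕ → ℝ → ℝ) (z : ℝ → ℝ)
    (hmono : ∀ n, Monotone (zseq n))
    (htop : ∀ n, Tendsto (zseq n) atTop atTop)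
    (hzmono : Monotone z)
    (hzstrict : StrictMonoOn z (Set.Ici (0 : ℝ)))
    (hzzero : ∀ u : ℝ, u ≤ 0 → z u = 0)
    (hztop : Tendsto z atTop atTop)
    (lam : ℕ → ℝ → ℝ)
    (hlammono : ∀ n, StrictMonoOn (lam n) (Set.Ici (0 : ℝ)))
    (hlamsurj : ∀ n, lam n '' Set.Ici (0 : ℝ) = Set.Ici (0 : ℝ))
    (hlamunif : ∀ ε : ℝ, 0 < ε → ∃ N : ℕ, ∀ n ≥ N, ∀ t : ℝ, 0 ≤ t → |lam n t - t| ≤ ε)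
    (hconv : ∀ T : ℝ, 0 < T → ∀ ε : ℝ, 0 < ε → ∃ N : ℕ, ∀ n ≥ N,
      ∀ t ∈ Set.Icc (0 : ℝ) T, |zseq n (lam n t) - z t| ≤ ε) :
    (∀ T : ℝ, 0 < T → ∀ ε : ℝ, 0 < ε → ∃ N : ℕ, ∀ n ≥ N,
      ∀ t ∈ Set.Icc (0 : ℝ) T, |rcInv (zseq n) t - rcInv z t| ≤ ε) ∧
    (∀ (tseq : ℕ → ℝ) (t : ℝ), 0 < t → Tendsto tseq atTop (𝓝 t) →
      Function.leftLim z (rcInv z t) < t → t < z (rcInv z t) →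
      Tendsto (fun n => zseq n (rcInv (zseq n) (tseq n)) -
          Function.leftLim (zseq n) (rcInv (zseq n) (tseq n)))
        atTop (𝓝 (z (rcInv z t) - Function.leftLim z (rcInv z t)))) := by
  have hlamconv : TendstoUniformlyOn lam id atTop (Ici 0) :=
    tendstoUniformlyOn_atTop_iff_abs_sub_le.2 hlamunif
  have hconv' (T : ℝ) : TendstoUniformlyOn (fun n t => zseq n (lam n t)) z atTop (Icc 0 T) :=
    (tendstoUniformlyOn_atTop_iff_abs_sub_le.2 (hconv (max T 1) (by positivity))).mono
      (Icc_subset_Icc_right (le_max_left T 1))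
  have hloc := tendstoLocallyUniformly_of_tendsto_of_monotone (fun n => rcInv_mono (htop n))
    (rcInv_mono hztop) (continuous_rcInv hzstrict hztop)
    (tendsto_rcInv_of_skorokhod htop hzstrict hztop hlammono hlamsurj hlamconv hconv')
  refine ⟨fun T _ => tendstoUniformlyOn_atTop_iff_abs_sub_le.1
    (tendstoLocallyUniformly_iff_forall_isCompact.1 hloc _ isCompact_Icc), ?_⟩
  intro tseq t ht htseq hl hr
  have ha : 0 < rcInv z t := (rcInv_nonneg hztop t).lt_of_ne fun h => by
    rw [← h, hzzero 0 le_rfl] at hr; linarith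
  exact tendsto_jump_of_skorokhod hmono hzmono htop hlammono hlamsurj hconv' ha htseq hl hr

/-- let `zₙ` be nondecreasing càdlàg functions on `[0,∞)` (encoded as
functions on `ℝ` vanishing on `(−∞,0]`) with `zₙ(0) = 0` and `zₙ(u) → ∞`, converging in
the Skorokhod `J₁` sense (via time changes `λₙ`) to a strictly increasing càdlàg `z` with
`z(0) = 0` and `z(u) → ∞`. Let `y, yₙ` be the right-continuous inverses. Then
(i) `yₙ → y` uniformly on compact subsets of `[0,∞)`, and
(ii) if `tₙ → t > 0` and `z(y(t)−) < t < z(y(t))`, then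
`Δzₙ(yₙ(tₙ)) → Δz(y(t))`, where `Δw(u) = w(u) − w(u−)`. -/
theorem stmt_19
    (zseq : ℕ → ℝ → ℝ) (z : ℝ → ℝ)
    (hmono : ∀ n, Monotone (zseq n))
    (hzero : ∀ n, ∀ u : ℝ, u ≤ 0 → zseq n u = 0)
    (hrc : ∀ n, ∀ u : ℝ, ContinuousWithinAt (zseq n) (Set.Ici u) u)
    (htop : ∀ n, Tendsto (zseq n) atTop atTop)
    (hzmono : Monotone z)
    (hzstrict : StrictMonoOn z (Set.Ici (0 : ℝ)))
    (hzzero : ∀ u : ℝ, u ≤ 0 → z u = 0)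
    (hzrc : ∀ u : ℝ, ContinuousWithinAt z (Set.Ici u) u)
    (hztop : Tendsto z atTop atTop)
    (lam : ℕ → ℝ → ℝ)
    (hlamc : ∀ n, ContinuousOn (lam n) (Set.Ici (0 : ℝ)))
    (hlam0 : ∀ n, lam n 0 = 0)
    (hlammono : ∀ n, StrictMonoOn (lam n) (Set.Ici (0 : ℝ)))
    (hlamsurj : ∀ n, lam n '' Set.Ici (0 : ℝ) = Set.Ici (0 : ℝ))
    (hlamunif : ∀ ε : ℝ, 0 < ε → ∃ N : ℕ, ∀ n ≥ N, ∀ t : ℝ, 0 ≤ t → |lam n t - t| ≤ ε)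
    (hconv : ∀ T : ℝ, 0 < T → ∀ ε : ℝ, 0 < ε → ∃ N : ℕ, ∀ n ≥ N,
      ∀ t ∈ Set.Icc (0 : ℝ) T, |zseq n (lam n t) - z t| ≤ ε) :
    (∀ T : ℝ, 0 < T → ∀ ε : ℝ, 0 < ε → ∃ N : ℕ, ∀ n ≥ N,
      ∀ t ∈ Set.Icc (0 : ℝ) T, |rcInv (zseq n) t - rcInv z t| ≤ ε) ∧
    (∀ (tseq : ℕ → ℝ) (t : ℝ), 0 < t → Tendsto tseq atTop (𝓝 t) →
      Function.leftLim z (rcInv z t) < t → t < z (rcInv z t) →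
      Tendsto (fun n => zseq n (rcInv (zseq n) (tseq n)) -
          Function.leftLim (zseq n) (rcInv (zseq n) (tseq n)))
        atTop (𝓝 (z (rcInv z t) - Function.leftLim z (rcInv z t)))) :=
  stmt_19_general zseq z hmono htop hzmono hzstrict hzzero hztop lam hlammono hlamsurj hlamunif
    hconv
end
end
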